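/- In the stage game get-close-to-one-of-two-targets, define player 1's expected utility U₁(a₁,a₂) = p₁·r₁·w(a₁,a₂;k₁) + p₂·r₂·w(a₁,a₂;k₂), where w(a₁,a₂;k) = 1 if player 1 wins the get-close-to-the-target round with actions a₁,a₂ and target k, = 1/2 in case of a draw, and = 0 if player 2 wins. Then: (i) for every a₂, U₁(k₁,a₂) ≥ p₁r₁/2; (ii) for every a₁ ≠ k₁, U₁(a₁,k₁) ≤ p₂r₂. Consequently, if p₁r₁ ≥ 2p₂r₂, then U₁(a₁,k₁) ≤ U₁(k₁,k₁) for all a₁, i.e., k₁ is a best response for player 1 to the opponent playing k₁, and playing k₁ guarantees player 1 expected utility at least p₁r₁/2. -/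

import Mathlib

/-- Possible outcomes of a round of a zero-sum stage game. -/
inductive Outcome
  | P1Wins
  | P2Wins
  | Draw
deriving DecidableEq

/-- The outcome of a round of *get-close-to-the-target* with actions `a₁` (player 1),
`a₂` (player 2) and hidden target `k`: if `|aᵢ - k| < |a₋ᵢ - k|` then player `i` wins;
if `a₁ = a₂ = a ≠ k` then player 1 wins if `a < k` and player 2 wins if `a > k`;
otherwise the round is a draw. -/
def outcome (a₁ a₂ k : ℤ) : Outcome :=
  if |a₁ - k| < |a₂ - k| then .P1Wins
  else if |a₂ - k| < |a₁ - k| then .P2Wins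
  else if a₁ = a₂ ∧ a₁ ≠ k then (if a₁ < k then .P1Wins else .P2Wins)
  else .Draw

/-- Player 1's winning weight for an outcome: `1` for a win, `1/2` for a draw, `0` for a
loss. -/
noncomputable def wval : Outcome → ℝ
  | .P1Wins => 1
  | .Draw => 1 / 2
  | .P2Wins => 0

/-- Player 1's expected utility in a round of get-close-to-one-of-two-targets:
`U₁(a₁,a₂) = p₁·r₁·w(a₁,a₂;k₁) + p₂·r₂·w(a₁,a₂;k₂)`. -/
noncomputable def U1two (k₁ k₂ : ℤ) (p₁ p₂ r₁ r₂ : ℝ) (a₁ a₂ : ℤ) : ℝ :=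
  p₁ * r₁ * wval (outcome a₁ a₂ k₁) + p₂ * r₂ * wval (outcome a₁ a₂ k₂)

lemma wval_nonneg (o : Outcome) : 0 ≤ wval o := by
  cases o <;> norm_num [wval]

lemma wval_le_one (o : Outcome) : wval o ≤ 1 := by
  cases o <;> norm_num [wval]

lemma outcome_target_left (a k : ℤ) : outcome k a k = if a = k then .Draw else .P1Wins := by
  rcases eq_or_ne a k with rfl | h
  · simp [outcome]
  · have h0 : (0 : ℤ) < |a - k| := abs_pos.mpr (sub_ne_zero.mpr h)
    simp [outcome, h0, h]

lemma outcome_target_right {a k : ℤ} (h : a ≠ k) : outcome a k k = .P2Wins := by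
  have h0 : (0 : ℤ) < |a - k| := abs_pos.mpr (sub_ne_zero.mpr h)
  simp [outcome, h0, not_lt_of_gt h0]

lemma one_half_le_wval_outcome_target_left (a k : ℤ) : 1 / 2 ≤ wval (outcome k a k) := by
  rw [outcome_target_left]
  split <;> norm_num [wval]

section U1two

variable {k₁ k₂ : ℤ} {p₁ p₂ r₁ r₂ : ℝ}

lemma half_le_U1two_target_left (h₁ : 0 ≤ p₁ * r₁) (h₂ : 0 ≤ p₂ * r₂) (a₂ : ℤ) :
    p₁ * r₁ / 2 ≤ U1two k₁ k₂ p₁ p₂ r₁ r₂ k₁ a₂ := by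
  have hw₁ := one_half_le_wval_outcome_target_left a₂ k₁
  have hw₂ := mul_nonneg h₂ (wval_nonneg (outcome k₁ a₂ k₂))
  unfold U1two
  nlinarith

lemma U1two_target_right_le {a₁ : ℤ} (h₂ : 0 ≤ p₂ * r₂) (ha₁ : a₁ ≠ k₁) :
    U1two k₁ k₂ p₁ p₂ r₁ r₂ a₁ k₁ ≤ p₂ * r₂ := by
  have hw₂ := mul_le_of_le_one_right h₂ (wval_le_one (outcome a₁ k₁ k₂))
  simpa [U1two, outcome_target_right ha₁, wval] using hw₂

lemma U1two_target_right_le_U1two_target (h₁ : 0 ≤ p₁ * r₁) (h₂ : 0 ≤ p₂ * r₂)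
    (hdom : 2 * (p₂ * r₂) ≤ p₁ * r₁) (a₁ : ℤ) :
    U1two k₁ k₂ p₁ p₂ r₁ r₂ a₁ k₁ ≤ U1two k₁ k₂ p₁ p₂ r₁ r₂ k₁ k₁ := by
  rcases eq_or_ne a₁ k₁ with rfl | ha₁
  · exact le_rfl
  · calc U1two k₁ k₂ p₁ p₂ r₁ r₂ a₁ k₁ ≤ p₂ * r₂ := U1two_target_right_le h₂ ha₁
      _ ≤ p₁ * r₁ / 2 := by linarith
      _ ≤ U1two k₁ k₂ p₁ p₂ r₁ r₂ k₁ k₁ := half_le_U1two_target_left h₁ h₂ k₁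

end U1two

theorem stmt13_general (n k₁ k₂ : ℤ) (p₁ p₂ r₁ r₂ : ℝ)
    (hp₁ : 0 < p₁) (hp₂ : 0 < p₂) (hr₁ : 0 < r₁) (hr₂ : 0 < r₂) :
    (∀ a₂ ∈ Finset.Icc 1 n, p₁ * r₁ / 2 ≤ U1two k₁ k₂ p₁ p₂ r₁ r₂ k₁ a₂) ∧
    (∀ a₁ ∈ Finset.Icc 1 n, a₁ ≠ k₁ → U1two k₁ k₂ p₁ p₂ r₁ r₂ a₁ k₁ ≤ p₂ * r₂) ∧
    (2 * (p₂ * r₂) ≤ p₁ * r₁ →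
      ∀ a₁ ∈ Finset.Icc 1 n,
        U1two k₁ k₂ p₁ p₂ r₁ r₂ a₁ k₁ ≤ U1two k₁ k₂ p₁ p₂ r₁ r₂ k₁ k₁) := by
  have h₁ : 0 ≤ p₁ * r₁ := (mul_pos hp₁ hr₁).le
  have h₂ : 0 ≤ p₂ * r₂ := (mul_pos hp₂ hr₂).le
  exact ⟨fun a₂ _ => half_le_U1two_target_left h₁ h₂ a₂,
    fun _ _ ha₁ => U1two_target_right_le h₂ ha₁,
    fun hdom a₁ _ => U1two_target_right_le_U1two_target h₁ h₂ hdom a₁⟩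

/-- In the stage game get-close-to-one-of-two-targets: (i) for every `a₂`,
`U₁(k₁,a₂) ≥ p₁r₁/2`; (ii) for every `a₁ ≠ k₁`, `U₁(a₁,k₁) ≤ p₂r₂`. Consequently, if
`p₁r₁ ≥ 2p₂r₂`, then `U₁(a₁,k₁) ≤ U₁(k₁,k₁)` for all `a₁`, i.e., `k₁` is a best response
for player 1 to the opponent playing `k₁`, and playing `k₁` guarantees player 1 expected
utility at least `p₁r₁/2`. -/
theorem stmt13 (n k₁ k₂ : ℤ) (p₁ p₂ r₁ r₂ : ℝ) (hn : 1 ≤ n)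
    (hk₁ : k₁ ∈ Finset.Icc 1 n) (hk₂ : k₂ ∈ Finset.Icc 1 n) (hkne : k₁ ≠ k₂)
    (hp₁ : 0 < p₁) (hp₂ : 0 < p₂) (hpsum : p₁ + p₂ = 1)
    (hr₁ : 0 < r₁) (hr₂ : 0 < r₂) (hrne : r₁ ≠ r₂) :
    (∀ a₂ ∈ Finset.Icc 1 n, p₁ * r₁ / 2 ≤ U1two k₁ k₂ p₁ p₂ r₁ r₂ k₁ a₂) ∧
    (∀ a₁ ∈ Finset.Icc 1 n, a₁ ≠ k₁ → U1two k₁ k₂ p₁ p₂ r₁ r₂ a₁ k₁ ≤ p₂ * r₂) ∧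
    (2 * (p₂ * r₂) ≤ p₁ * r₁ →
      ∀ a₁ ∈ Finset.Icc 1 n,
        U1two k₁ k₂ p₁ p₂ r₁ r₂ a₁ k₁ ≤ U1two k₁ k₂ p₁ p₂ r₁ r₂ k₁ k₁) :=
  stmt13_general n k₁ k₂ p₁ p₂ r₁ r₂ hp₁ hp₂ hr₁ hr₂
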